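/- Let μ be a radial weight with μ ∈ D̂, let γ > 0 and let k ∈ ℕ with k ≥ 2. Then there exist constants C₁, C₂ > 0 such that C₁ ∫_0^r dt/((1−t) μ̂(t)^γ) ≤ Σ_{n=0}^∞ r^{k^n}/μ_{k^n}^γ ≤ C₂ ∫_0^r dt/((1−t) μ̂(t)^γ) for all 0 ≤ r < 1. -/

import Mathlib

/-!
On the `k`-adic points `rₙ = 1 - k⁻ⁿ`, iterating the `D̂` condition `k` times gives
`μ̂(rₙ) ≤ Cᵏ μ̂(rₙ₊₁)`, and splitting the moment integral along these points gives
`μ_{kⁿ} ≍ μ̂(rₙ)`. So with `bₙ = μ̂(rₙ)^(-γ)`, which grows at most geometrically, both sides are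
comparable to `r (b₀ + ⋯ + b_N)` for `r_N ≤ r < r_{N+1}`. For the integral: the integrand is
monotone and equals `kⁿ bₙ` at `rₙ`, while `[rₙ, rₙ₊₁]` has length `≍ k⁻ⁿ`. For the series: the
factors `r^{kⁿ}` are at least `1/2` for `n < N`, and for `n > N` they are at most
`2 r exp(-k^{n-N-1})`, a doubly exponential decay that beats the geometric growth of `bₙ`.
-/

open MeasureTheory Set Filter
open scoped ENNReal

/-- The tail integral `ω̂(r) = ∫_r^1 ω(s) ds` of a radial weight. -/
noncomputable def wHat (ω : ℝ → ℝ) (r : ℝ) : ℝ := ∫ s in r..1, ω s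

/-- The moment `ω_x = ∫_0^1 s^x ω(s) ds` of a radial weight. -/
noncomputable def wMom (ω : ℝ → ℝ) (x : ℝ) : ℝ := ∫ s in (0:ℝ)..1, s ^ x * ω s

/-- A radial weight: nonnegative, integrable on `[0,1)`, with positive tail integrals. -/
def IsRadialWeight (ω : ℝ → ℝ) : Prop :=
  (∀ s ∈ Set.Ico (0:ℝ) 1, 0 ≤ ω s) ∧
    MeasureTheory.IntegrableOn ω (Set.Ico (0:ℝ) 1) ∧
    ∀ r ∈ Set.Ico (0:ℝ) 1, 0 < wHat ω r

/-- The class `D̂` of radial weights. -/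
def Dhat (ω : ℝ → ℝ) : Prop :=
  ∃ C > (1:ℝ), ∀ r ∈ Set.Ico (0:ℝ) 1, wHat ω r ≤ C * wHat ω ((1 + r) / 2)

/-- The class `Ď` of radial weights. -/
def Dcheck (ω : ℝ → ℝ) : Prop :=
  ∃ k > (1:ℝ), ∃ C > (1:ℝ), ∀ r ∈ Set.Ico (0:ℝ) 1,
    wHat ω r ≥ C * wHat ω (1 - (1 - r) / k)

/-- The class `D = D̂ ∩ Ď`. -/
def Dclass (ω : ℝ → ℝ) : Prop := Dhat ω ∧ Dcheck ω

/-- The class `M`: `ω_x ≥ C ω_{kx}` for all `x ≥ 1`. -/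
def Mclass (ω : ℝ → ℝ) : Prop :=
  ∃ C > (1:ℝ), ∃ k > (1:ℝ), ∀ x : ℝ, 1 ≤ x → wMom ω x ≥ C * wMom ω (k * x)

/-- The fractional derivative `D^μ f(z) = Σ (f̂(n)/μ_{2n+1}) zⁿ` induced by a radial
weight `μ`, acting on the Taylor coefficients `a` of `f`. -/
noncomputable def Dfrac (μ : ℝ → ℝ) (a : ℕ → ℂ) (z : ℂ) : ℂ :=
  ∑' n : ℕ, (a n / ((wMom μ (2 * (n : ℝ) + 1) : ℝ) : ℂ)) * z ^ n

/-- `∫_𝔻 |f(z)|^p w(|z|) dA(z)` as a Lebesgue integral (up to the normalization `1/π`). -/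
noncomputable def discLInt (p : ℝ) (w : ℝ → ℝ) (f : ℂ → ℂ) : ℝ≥0∞ :=
  ∫⁻ z in Metric.ball (0:ℂ) 1, ENNReal.ofReal (‖f z‖ ^ p * w ‖z‖)

lemma le_pow_mul_of_le_mul_succ {a : ℕ → ℝ} {c : ℝ} (hc : 0 ≤ c) (h : ∀ n, a n ≤ c * a (n + 1))
    (n m : ℕ) : a n ≤ c ^ m * a (n + m) := by
  induction m with
  | zero => simp
  | succ m ih =>
    calc a n ≤ c ^ m * a (n + m) := ih
      _ ≤ c ^ m * (c * a (n + m + 1)) := by gcongr; exact h _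
      _ = c ^ (m + 1) * a (n + (m + 1)) := by ring_nf

lemma le_pow_mul_of_succ_le_mul {a : ℕ → ℝ} {c : ℝ} (hc : 0 ≤ c) (h : ∀ n, a (n + 1) ≤ c * a n)
    (n m : ℕ) : a (n + m) ≤ c ^ m * a n := by
  induction m with
  | zero => simp
  | succ m ih =>
    calc a (n + (m + 1)) ≤ c * a (n + m) := h _
      _ ≤ c * (c ^ m * a n) := by gcongr
      _ = c ^ (m + 1) * a n := by ring

lemma summable_pow_mul_exp_neg_pow {q : ℝ} (hq : 1 < q) (a : ℝ) :
    Summable fun m : ℕ => a ^ m * Real.exp (-q ^ m) := by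
  refine summable_of_ratio_norm_eventually_le (r := 1 / 2) (by norm_num) ?_
  have hgap : Tendsto (fun m : ℕ => (q - 1) * q ^ m) atTop atTop :=
    (tendsto_pow_atTop_atTop_of_one_lt hq).const_mul_atTop (by linarith)
  filter_upwards [hgap.eventually_ge_atTop (Real.log (2 * ‖a‖ + 1))] with m hm
  have hexp : ‖a‖ * Real.exp (-((q - 1) * q ^ m)) ≤ 1 / 2 := by
    have h : Real.exp (-((q - 1) * q ^ m)) ≤ (2 * ‖a‖ + 1)⁻¹ := by
      rw [← Real.exp_log (by positivity : (0 : ℝ) < 2 * ‖a‖ + 1), ← Real.exp_neg]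
      exact Real.exp_le_exp.2 (neg_le_neg hm)
    calc ‖a‖ * Real.exp (-((q - 1) * q ^ m)) ≤ ‖a‖ * (2 * ‖a‖ + 1)⁻¹ := by gcongr
      _ ≤ 1 / 2 := by
        rw [← div_eq_mul_inv, div_le_iff₀ (by positivity)]; linarith [norm_nonneg a]
  have hsplit : Real.exp (-q ^ (m + 1)) = Real.exp (-((q - 1) * q ^ m)) * Real.exp (-q ^ m) := by
    rw [← Real.exp_add]; ring_nf
  simp only [norm_mul, norm_pow, Real.norm_eq_abs, abs_of_pos (Real.exp_pos _)] at hexp ⊢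
  rw [hsplit]
  calc |a| ^ (m + 1) * (Real.exp (-((q - 1) * q ^ m)) * Real.exp (-q ^ m))
      = (|a| * Real.exp (-((q - 1) * q ^ m))) * (|a| ^ m * Real.exp (-q ^ m)) := by ring
    _ ≤ 1 / 2 * (|a| ^ m * Real.exp (-q ^ m)) := by gcongr

-- Only `b 0` needs the factor `r`; every later term is at most `L` times its predecessor.
lemma mul_sum_range_succ_le {b : ℕ → ℝ} {L r X : ℝ} {N : ℕ} (hb : ∀ n, 0 ≤ b n) (hL : 0 ≤ L)
    (hbL : ∀ n, b (n + 1) ≤ L * b n) (hr : r ≤ 1) (h₀ : r * b 0 ≤ X)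
    (hN : ∑ n ∈ Finset.range N, b n ≤ 2 * X) :
    r * ∑ n ∈ Finset.range (N + 1), b n ≤ (1 + 2 * L) * X := by
  have hshift : ∑ n ∈ Finset.range N, b (n + 1) ≤ L * ∑ n ∈ Finset.range N, b n := by
    rw [Finset.mul_sum]; exact Finset.sum_le_sum fun n _ => hbL n
  have hpos : 0 ≤ ∑ n ∈ Finset.range N, b (n + 1) := Finset.sum_nonneg fun n _ => hb _
  rw [Finset.sum_range_succ', mul_add]
  nlinarith [mul_le_of_le_one_left hpos hr]

lemma inv_rpow_le_mul_inv_rpow {u v c γ : ℝ} (hu : 0 < u) (hc : 0 ≤ c) (hγ : 0 ≤ γ)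
    (h : u ≤ c * v) : (v ^ γ)⁻¹ ≤ c ^ γ * (u ^ γ)⁻¹ := by
  have hv : 0 < v := pos_of_mul_pos_right (hu.trans_le h) hc
  have key : u ^ γ ≤ c ^ γ * v ^ γ :=
    (Real.rpow_le_rpow hu.le h hγ).trans_eq (Real.mul_rpow hc hv.le)
  rw [← div_eq_mul_inv, le_div_iff₀ (Real.rpow_pos_of_pos hu γ), ← div_eq_inv_mul,
    div_le_iff₀ (Real.rpow_pos_of_pos hv γ)]
  linarith

noncomputable def kadicPoint (k n : ℕ) : ℝ := 1 - ((k : ℝ) ^ n)⁻¹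

section kadicPoint

variable {k : ℕ}

@[simp] lemma kadicPoint_zero : kadicPoint k 0 = 0 := by simp [kadicPoint]

lemma kadicPoint_succ (n : ℕ) : kadicPoint k (n + 1) = 1 - (1 - kadicPoint k n) / k := by
  simp [kadicPoint, pow_succ, div_eq_mul_inv, mul_comm]

lemma kadicPoint_lt_one (hk : 1 ≤ k) (n : ℕ) : kadicPoint k n < 1 := by
  have : (0 : ℝ) < k := by exact_mod_cast hk
  rw [kadicPoint, sub_lt_self_iff]
  positivity

lemma kadicPoint_nonneg (hk : 1 ≤ k) (n : ℕ) : 0 ≤ kadicPoint k n := by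
  have : (1 : ℝ) ≤ k := by exact_mod_cast hk
  rw [kadicPoint, sub_nonneg]; exact inv_le_one_of_one_le₀ (one_le_pow₀ this)

lemma kadicPoint_mono (hk : 1 ≤ k) : Monotone (kadicPoint k) := by
  have : (1 : ℝ) ≤ k := by exact_mod_cast hk
  intro m n hmn
  rw [kadicPoint, kadicPoint, sub_le_sub_iff_left]
  exact inv_anti₀ (by positivity) (pow_le_pow_right₀ this hmn)

lemma kadicPoint_succ_sub (n : ℕ) :
    kadicPoint k (n + 1) - kadicPoint k n = (1 - (k : ℝ)⁻¹) * (1 - kadicPoint k n) := by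
  simp only [kadicPoint, pow_succ]; ring

lemma kadicPoint_succ_sub' (hk : 1 ≤ k) (n : ℕ) :
    kadicPoint k (n + 1) - kadicPoint k n = (k - 1) * (1 - kadicPoint k (n + 1)) := by
  have : (0 : ℝ) < k := by exact_mod_cast hk
  simp only [kadicPoint, pow_succ]
  field_simp
  ring

lemma half_le_kadicPoint (hk : 2 ≤ k) {n : ℕ} (hn : 1 ≤ n) : 1 / 2 ≤ kadicPoint k n := by
  have hk' : (2 : ℝ) ≤ k := by exact_mod_cast hk
  calc (1 : ℝ) / 2 ≤ 1 - (k : ℝ)⁻¹ := by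
        have := inv_anti₀ (by norm_num) hk'; linarith
    _ = kadicPoint k 1 := by simp [kadicPoint]
    _ ≤ kadicPoint k n := kadicPoint_mono (by omega) hn

lemma exists_kadicPoint_le_lt (hk : 2 ≤ k) {r : ℝ} (hr : r ∈ Ico (0 : ℝ) 1) :
    ∃ N, kadicPoint k N ≤ r ∧ r < kadicPoint k (N + 1) := by
  have hk' : (1 : ℝ) < k := by exact_mod_cast hk
  have h1r : 0 < 1 - r := by linarith [hr.2]
  obtain ⟨N, hle, hlt⟩ := exists_nat_pow_near (one_le_inv_iff₀.2 ⟨h1r, by linarith [hr.1]⟩) hk'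
  refine ⟨N, ?_, ?_⟩
  · have := inv_anti₀ (by positivity) hle
    rw [inv_inv] at this; rw [kadicPoint]; linarith
  · have := inv_strictAnti₀ (by positivity) hlt
    rw [inv_inv] at this; rw [kadicPoint]; linarith

lemma kadicPoint_pow_le_exp (hk : 1 ≤ k) (j m : ℕ) :
    kadicPoint k j ^ k ^ (j + m) ≤ Real.exp (-(k : ℝ) ^ m) := by
  calc kadicPoint k j ^ k ^ (j + m) ≤ Real.exp (-((k : ℝ) ^ j)⁻¹) ^ k ^ (j + m) := by
        gcongr
        · exact kadicPoint_nonneg hk j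
        · rw [kadicPoint]; linarith [Real.add_one_le_exp (-((k : ℝ) ^ j)⁻¹)]
    _ = Real.exp (-(k : ℝ) ^ m) := by
        rw [← Real.exp_nat_mul]; push_cast; rw [pow_add]; field_simp

lemma half_le_kadicPoint_pow (hk : 2 ≤ k) {n N : ℕ} (hn : n < N) :
    1 / 2 ≤ kadicPoint k N ^ k ^ n := by
  have hk' : (2 : ℝ) ≤ k := by exact_mod_cast hk
  have hN : 0 < (k : ℝ) ^ N := by positivity
  have hpow : 2 * (k : ℝ) ^ n ≤ (k : ℝ) ^ N :=
    calc 2 * (k : ℝ) ^ n ≤ (k : ℝ) ^ (n + 1) := by rw [pow_succ']; gcongr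
      _ ≤ (k : ℝ) ^ N := pow_le_pow_right₀ (by linarith) hn
  have hratio : (k : ℝ) ^ n * ((k : ℝ) ^ N)⁻¹ ≤ 1 / 2 := by
    rw [← div_eq_mul_inv, div_le_iff₀ hN]; linarith
  have hber := one_add_mul_le_pow (a := -((k : ℝ) ^ N)⁻¹)
    (by linarith [inv_le_one_of_one_le₀ (one_le_pow₀ (by linarith : (1 : ℝ) ≤ k) (n := N))]) (k ^ n)
  rw [← sub_eq_add_neg, ← kadicPoint] at hber
  push_cast at hber
  linarith

end kadicPoint

section MonotoneIntegral

variable {g : ℝ → ℝ} {a b : ℝ}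

lemma MonotoneOn.sub_mul_le_intervalIntegral (hab : a ≤ b) (hg : MonotoneOn g (Icc a b)) :
    (b - a) * g a ≤ ∫ x in a..b, g x := by
  have h := intervalIntegral.integral_mono_on hab intervalIntegrable_const
    (hg.mono (uIcc_of_le hab).subset).intervalIntegrable (μ := volume)
    (fun x hx => hg (left_mem_Icc.2 hab) hx hx.1)
  simpa using h

lemma MonotoneOn.intervalIntegral_le_sub_mul (hab : a ≤ b) (hg : MonotoneOn g (Icc a b)) :
    ∫ x in a..b, g x ≤ (b - a) * g b := by
  have h := intervalIntegral.integral_mono_on hab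
    (hg.mono (uIcc_of_le hab).subset).intervalIntegrable (μ := volume) intervalIntegrable_const
    (fun x hx => hg hx (right_mem_Icc.2 hab) hx.2)
  simpa using h

lemma MonotoneOn.mono_Icc_of_lt_one (hg : MonotoneOn g (Ico 0 1)) (ha : 0 ≤ a) (hb : b < 1) :
    MonotoneOn g (Icc a b) :=
  hg.mono fun _ hx => ⟨ha.trans hx.1, hx.2.trans_lt hb⟩

lemma MonotoneOn.intervalIntegral_zero_le_of_le (hg : MonotoneOn g (Ico 0 1)) (hg0 : 0 ≤ g 0)
    {a b : ℝ} (ha : 0 ≤ a) (hab : a ≤ b) (hb : b < 1) :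
    ∫ t in (0 : ℝ)..a, g t ≤ ∫ t in (0 : ℝ)..b, g t := by
  refine intervalIntegral.integral_mono_interval le_rfl ha hab ?_ ?_
  · filter_upwards [ae_restrict_mem measurableSet_Ioc] with t ht
    exact hg0.trans (hg ⟨le_rfl, by norm_num⟩ ⟨ht.1.le, ht.2.trans_lt hb⟩ ht.1.le)
  · refine MonotoneOn.intervalIntegrable ?_
    rw [uIcc_of_le (ha.trans hab)]
    exact MonotoneOn.mono_Icc_of_lt_one hg le_rfl hb

end MonotoneIntegral

section KadicSeries

variable {k : ℕ} (hk : 2 ≤ k) {b : ℕ → ℝ} (hb : ∀ n, 0 ≤ b n) {r : ℝ}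
include hb

lemma mul_le_tsum_pow_mul (hr : 0 ≤ r) (hs : Summable fun n => r ^ k ^ n * b n) :
    r * b 0 ≤ ∑' n, r ^ k ^ n * b n := by
  simpa using hs.le_tsum 0 fun n _ => mul_nonneg (pow_nonneg hr _) (hb n)

include hk

lemma sum_le_two_mul_tsum_pow_mul {N : ℕ} (hNr : kadicPoint k N ≤ r)
    (hs : Summable fun n => r ^ k ^ n * b n) :
    ∑ n ∈ Finset.range N, b n ≤ 2 * ∑' n, r ^ k ^ n * b n := by
  have hr : 0 ≤ r := (kadicPoint_nonneg (by omega) N).trans hNr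
  calc ∑ n ∈ Finset.range N, b n ≤ ∑ n ∈ Finset.range N, 2 * (r ^ k ^ n * b n) := by
        refine Finset.sum_le_sum fun n hn => ?_
        have hhalf := (half_le_kadicPoint_pow hk (Finset.mem_range.1 hn)).trans
          (pow_le_pow_left₀ (kadicPoint_nonneg (by omega) N) hNr (k ^ n))
        nlinarith [hb n]
    _ = 2 * ∑ n ∈ Finset.range N, r ^ k ^ n * b n := by rw [Finset.mul_sum]
    _ ≤ 2 * ∑' n, r ^ k ^ n * b n := by
        gcongr
        exact hs.sum_le_tsum _ fun n _ => mul_nonneg (pow_nonneg hr _) (hb n)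

variable {L : ℝ} (hL : 0 ≤ L) (hbL : ∀ n, b (n + 1) ≤ L * b n)
include hL hbL

lemma pow_mul_le_of_lt_kadicPoint (hr : 0 ≤ r) {N : ℕ} (hrN : r < kadicPoint k (N + 1)) (m : ℕ) :
    r ^ k ^ (m + (N + 1)) * b (m + (N + 1)) ≤
      (2 * L * r * b N) * (L ^ m * Real.exp (-(k : ℝ) ^ m)) := by
  set ρ := kadicPoint k (N + 1)
  have hρ : 1 / 2 ≤ ρ := half_le_kadicPoint hk (Nat.le_add_left 1 N)
  obtain ⟨M, hM⟩ : ∃ M, k ^ (m + (N + 1)) = M + 1 :=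
    Nat.exists_eq_add_one.2 (pow_pos (by omega) _)
  have hpow : r ^ k ^ (m + (N + 1)) * ρ ≤ r * ρ ^ k ^ (m + (N + 1)) := by
    rw [hM, pow_succ, pow_succ]
    have := mul_le_mul_of_nonneg_right (pow_le_pow_left₀ hr hrN.le M)
      (mul_nonneg hr (by linarith : (0 : ℝ) ≤ ρ))
    linarith
  have hexp : ρ ^ k ^ (m + (N + 1)) ≤ Real.exp (-(k : ℝ) ^ m) := by
    rw [add_comm m]; exact kadicPoint_pow_le_exp (by omega) _ _
  have hgrowth : b (m + (N + 1)) ≤ L ^ m * (L * b N) := by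
    have h := le_pow_mul_of_succ_le_mul hL hbL N (m + 1)
    rwa [show N + (m + 1) = m + (N + 1) by ring, pow_succ, mul_assoc] at h
  have hrpow : r ^ k ^ (m + (N + 1)) ≤ 2 * r * Real.exp (-(k : ℝ) ^ m) := by
    nlinarith [Real.exp_pos (-(k : ℝ) ^ m), pow_nonneg hr (k ^ (m + (N + 1)))]
  calc r ^ k ^ (m + (N + 1)) * b (m + (N + 1))
      ≤ (2 * r * Real.exp (-(k : ℝ) ^ m)) * (L ^ m * (L * b N)) :=
        mul_le_mul hrpow hgrowth (hb _) (by positivity)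
    _ = (2 * L * r * b N) * (L ^ m * Real.exp (-(k : ℝ) ^ m)) := by ring

lemma summable_pow_mul (hr : r ∈ Ico (0 : ℝ) 1) : Summable fun n => r ^ k ^ n * b n := by
  obtain ⟨N, -, hrN⟩ := exists_kadicPoint_le_lt hk hr
  rw [← summable_nat_add_iff (N + 1)]
  exact ((summable_pow_mul_exp_neg_pow (by exact_mod_cast hk) L).mul_left _).of_nonneg_of_le
    (fun m => mul_nonneg (pow_nonneg hr.1 _) (hb _))
    (pow_mul_le_of_lt_kadicPoint hk hb hL hbL hr.1 hrN)

lemma tsum_pow_mul_le (hr : 0 ≤ r) {N : ℕ} (hrN : r < kadicPoint k (N + 1)) :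
    ∑' n, r ^ k ^ n * b n ≤
      (1 + 2 * L * ∑' m : ℕ, L ^ m * Real.exp (-(k : ℝ) ^ m)) *
        (r * ∑ n ∈ Finset.range (N + 1), b n) := by
  have hr1 : r ≤ 1 := hrN.le.trans (kadicPoint_lt_one (by omega) _).le
  have hs := summable_pow_mul hk hb hL hbL ⟨hr, hrN.trans (kadicPoint_lt_one (by omega) _)⟩
  have hB := summable_pow_mul_exp_neg_pow (by exact_mod_cast hk : (1 : ℝ) < k) L
  have hhead : ∑ n ∈ Finset.range (N + 1), r ^ k ^ n * b n ≤
      r * ∑ n ∈ Finset.range (N + 1), b n := by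
    rw [Finset.mul_sum]
    exact Finset.sum_le_sum fun n _ => mul_le_mul_of_nonneg_right
      (pow_le_of_le_one hr hr1 (pow_pos (by omega) n).ne') (hb n)
  have htail : ∑' m, r ^ k ^ (m + (N + 1)) * b (m + (N + 1)) ≤
      2 * L * r * b N * ∑' m : ℕ, L ^ m * Real.exp (-(k : ℝ) ^ m) := by
    rw [← tsum_mul_left]
    exact ((summable_nat_add_iff (N + 1)).2 hs).tsum_le_tsum
      (pow_mul_le_of_lt_kadicPoint hk hb hL hbL hr hrN) (hB.mul_left _)
  have hbN : b N ≤ ∑ n ∈ Finset.range (N + 1), b n :=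
    Finset.single_le_sum (fun n _ => hb n) (Finset.self_mem_range_succ N)
  rw [← hs.sum_add_tsum_nat_add (N + 1)]
  have : 2 * L * r * b N * ∑' m : ℕ, L ^ m * Real.exp (-(k : ℝ) ^ m) ≤
      2 * L * (∑' m : ℕ, L ^ m * Real.exp (-(k : ℝ) ^ m)) *
        (r * ∑ n ∈ Finset.range (N + 1), b n) := by
    have := mul_le_mul_of_nonneg_left hbN (by positivity : 0 ≤ 2 * L * r *
      ∑' m : ℕ, L ^ m * Real.exp (-(k : ℝ) ^ m))
    linarith
  linarith

end KadicSeries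

noncomputable def kadicSample (g : ℝ → ℝ) (k n : ℕ) : ℝ := (1 - kadicPoint k n) * g (kadicPoint k n)

section KadicIntegral

variable {g : ℝ → ℝ} {k : ℕ} (hk : 2 ≤ k) (hg : MonotoneOn g (Ico 0 1))
include hk hg

lemma kadicSample_nonneg (hg0 : 0 ≤ g 0) (n : ℕ) : 0 ≤ kadicSample g k n := by
  have h0 := kadicPoint_nonneg (k := k) (by omega) n
  have h1 := kadicPoint_lt_one (k := k) (by omega) n
  exact mul_nonneg (by linarith) (hg0.trans (hg ⟨le_rfl, by norm_num⟩ ⟨h0, h1⟩ h0))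

lemma monotoneOn_Icc_kadicPoint (n : ℕ) :
    MonotoneOn g (Icc (kadicPoint k n) (kadicPoint k (n + 1))) :=
  MonotoneOn.mono_Icc_of_lt_one hg (kadicPoint_nonneg (by omega) n) (kadicPoint_lt_one (by omega) _)

lemma kadicSample_le_two_mul_integral (hg0 : 0 ≤ g 0) (n : ℕ) :
    kadicSample g k n ≤ 2 * ∫ t in kadicPoint k n..kadicPoint k (n + 1), g t := by
  have hk' : (2 : ℝ) ≤ k := by exact_mod_cast hk
  have hle := kadicPoint_mono (k := k) (by omega) (Nat.le_succ n)
  have h := MonotoneOn.sub_mul_le_intervalIntegral hle (monotoneOn_Icc_kadicPoint hk hg n)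
  rw [kadicPoint_succ_sub n, mul_assoc] at h
  have hinv : (k : ℝ)⁻¹ ≤ 1 / 2 := by rw [inv_le_comm₀ (by linarith) (by norm_num)]; linarith
  have := kadicSample_nonneg hk hg hg0 n
  rw [kadicSample] at this ⊢
  nlinarith

lemma integral_le_kadicSample_succ (n : ℕ) :
    ∫ t in kadicPoint k n..kadicPoint k (n + 1), g t ≤ (k - 1) * kadicSample g k (n + 1) := by
  have h := MonotoneOn.intervalIntegral_le_sub_mul
    (kadicPoint_mono (k := k) (by omega) (Nat.le_succ n)) (monotoneOn_Icc_kadicPoint hk hg n)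
  rwa [kadicPoint_succ_sub' (by omega) n, mul_assoc] at h

lemma integral_kadicPoint_eq_sum (N : ℕ) :
    ∫ t in (0 : ℝ)..kadicPoint k N, g t =
      ∑ n ∈ Finset.range N, ∫ t in kadicPoint k n..kadicPoint k (n + 1), g t := by
  rw [intervalIntegral.sum_integral_adjacent_intervals, kadicPoint_zero]
  intro n _
  refine MonotoneOn.intervalIntegrable ?_
  rw [uIcc_of_le (kadicPoint_mono (by omega) (Nat.le_succ n))]
  exact monotoneOn_Icc_kadicPoint hk hg n

lemma sum_kadicSample_le_two_mul_integral (hg0 : 0 ≤ g 0) {r : ℝ} {N : ℕ} (hNr : kadicPoint k N ≤ r)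
    (hr : r < 1) :
    ∑ n ∈ Finset.range N, kadicSample g k n ≤ 2 * ∫ t in (0 : ℝ)..r, g t := by
  calc ∑ n ∈ Finset.range N, kadicSample g k n
      ≤ ∑ n ∈ Finset.range N, 2 * ∫ t in kadicPoint k n..kadicPoint k (n + 1), g t :=
        Finset.sum_le_sum fun n _ => kadicSample_le_two_mul_integral hk hg hg0 n
    _ = 2 * ∫ t in (0 : ℝ)..kadicPoint k N, g t := by
        rw [← Finset.mul_sum, integral_kadicPoint_eq_sum hk hg]
    _ ≤ 2 * ∫ t in (0 : ℝ)..r, g t := by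
        gcongr
        exact MonotoneOn.intervalIntegral_zero_le_of_le hg hg0 (kadicPoint_nonneg (by omega) N)
          hNr hr

lemma integral_le_mul_sum_kadicSample (hg0 : 0 ≤ g 0) {L : ℝ} (hL : 0 ≤ L)
    (hgL : ∀ n, kadicSample g k (n + 1) ≤ L * kadicSample g k n) {r : ℝ} {N : ℕ}
    (hNr : kadicPoint k N ≤ r) (hrN : r < kadicPoint k (N + 1)) :
    ∫ t in (0 : ℝ)..r, g t ≤ 2 * k * L * (r * ∑ n ∈ Finset.range (N + 1), kadicSample g k n) := by
  have hk' : (2 : ℝ) ≤ k := by exact_mod_cast hk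
  have hr : 0 ≤ r := (kadicPoint_nonneg (by omega) N).trans hNr
  have hb := kadicSample_nonneg hk hg hg0
  rcases Nat.eq_zero_or_pos N with rfl | hN
  · have hρ : 1 - kadicPoint k 1 = (k : ℝ)⁻¹ := by simp [kadicPoint]
    have hint := MonotoneOn.intervalIntegral_le_sub_mul hr
      (MonotoneOn.mono_Icc_of_lt_one hg le_rfl (hrN.trans (kadicPoint_lt_one (by omega) 1)))
    have hg1 : g (kadicPoint k 1) ≤ k * (L * kadicSample g k 0) := by
      have := hgL 0
      rw [kadicSample, hρ, inv_mul_eq_div, div_le_iff₀ (by linarith)] at this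
      linarith
    have hgr : g r ≤ g (kadicPoint k 1) :=
      hg ⟨hr, hrN.trans (kadicPoint_lt_one (by omega) 1)⟩ ⟨kadicPoint_nonneg (by omega) 1,
        kadicPoint_lt_one (by omega) 1⟩ hrN.le
    have hkL : 0 ≤ k * (L * (r * kadicSample g k 0)) := by have := hb 0; positivity
    calc ∫ t in (0 : ℝ)..r, g t ≤ r * g r := by simpa using hint
      _ ≤ r * (k * (L * kadicSample g k 0)) := by gcongr; exact hgr.trans hg1
      _ ≤ 2 * k * L * (r * ∑ n ∈ Finset.range (0 + 1), kadicSample g k n) := by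
          rw [zero_add, Finset.sum_range_one]; linarith
  · have hr2 : 1 ≤ 2 * r := by linarith [half_le_kadicPoint hk hN]
    have hsum : ∑ n ∈ Finset.range (N + 1), kadicSample g k (n + 1) ≤
        L * ∑ n ∈ Finset.range (N + 1), kadicSample g k n := by
      rw [Finset.mul_sum]; exact Finset.sum_le_sum fun n _ => hgL n
    have hpos : 0 ≤ L * ∑ n ∈ Finset.range (N + 1), kadicSample g k n :=
      mul_nonneg hL (Finset.sum_nonneg fun n _ => hb n)
    calc ∫ t in (0 : ℝ)..r, g t ≤ ∫ t in (0 : ℝ)..kadicPoint k (N + 1), g t :=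
          MonotoneOn.intervalIntegral_zero_le_of_le hg hg0 hr hrN.le
            (kadicPoint_lt_one (by omega) _)
      _ ≤ ∑ n ∈ Finset.range (N + 1), (k - 1) * kadicSample g k (n + 1) := by
          rw [integral_kadicPoint_eq_sum hk hg]
          exact Finset.sum_le_sum fun n _ => integral_le_kadicSample_succ hk hg n
      _ ≤ (k - 1) * (L * ∑ n ∈ Finset.range (N + 1), kadicSample g k n) := by
          rw [← Finset.mul_sum]; gcongr; linarith
      _ ≤ k * (2 * r * (L * ∑ n ∈ Finset.range (N + 1), kadicSample g k n)) := by
          exact mul_le_mul (by linarith) (le_mul_of_one_le_left hpos hr2) hpos (by linarith)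
      _ = 2 * k * L * (r * ∑ n ∈ Finset.range (N + 1), kadicSample g k n) := by ring

theorem exists_integral_asymp_tsum_pow_mul_kadicSample (hg0 : 0 ≤ g 0) {L : ℝ} (hL : 0 ≤ L)
    (hgL : ∀ n, kadicSample g k (n + 1) ≤ L * kadicSample g k n) :
    ∃ c₁ > (0 : ℝ), ∃ c₂ > (0 : ℝ), ∀ r ∈ Ico (0 : ℝ) 1,
      Summable (fun n => r ^ k ^ n * kadicSample g k n) ∧
      c₁ * ∫ t in (0 : ℝ)..r, g t ≤ ∑' n, r ^ k ^ n * kadicSample g k n ∧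
      ∑' n, r ^ k ^ n * kadicSample g k n ≤ c₂ * ∫ t in (0 : ℝ)..r, g t := by
  have hb := kadicSample_nonneg hk hg hg0
  set B := ∑' m : ℕ, L ^ m * Real.exp (-(k : ℝ) ^ m)
  refine ⟨(2 * k * (L + 1) * (1 + 2 * L))⁻¹, by positivity, (1 + 2 * L * B) * (1 + 2 * L),
    by positivity, fun r hr => ?_⟩
  obtain ⟨N, hNr, hrN⟩ := exists_kadicPoint_le_lt hk hr
  have hs := summable_pow_mul hk hb hL hgL hr
  set P := r * ∑ n ∈ Finset.range (N + 1), kadicSample g k n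
  have hP : 0 ≤ P := mul_nonneg hr.1 (Finset.sum_nonneg fun n _ => hb n)
  have hI₀ : r * kadicSample g k 0 ≤ ∫ t in (0 : ℝ)..r, g t := by
    simpa [kadicSample] using MonotoneOn.sub_mul_le_intervalIntegral hr.1
      (MonotoneOn.mono_Icc_of_lt_one hg le_rfl hr.2)
  have hPI := mul_sum_range_succ_le hb hL hgL hr.2.le hI₀
    (sum_kadicSample_le_two_mul_integral hk hg hg0 hNr hr.2)
  have hPS := mul_sum_range_succ_le hb hL hgL hr.2.le (mul_le_tsum_pow_mul hb hr.1 hs)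
    (sum_le_two_mul_tsum_pow_mul hk hb hNr hs)
  have hIP := integral_le_mul_sum_kadicSample hk hg hg0 hL hgL hNr hrN
  have hSP := tsum_pow_mul_le hk hb hL hgL hr.1 hrN
  refine ⟨hs, ?_, ?_⟩
  · rw [← div_eq_inv_mul, div_le_iff₀ (by positivity)]
    calc ∫ t in (0 : ℝ)..r, g t ≤ 2 * k * L * P := hIP
      _ ≤ 2 * k * (L + 1) * ((1 + 2 * L) * ∑' n, r ^ k ^ n * kadicSample g k n) := by
          gcongr
          linarith
      _ = _ := by ring
  · calc ∑' n, r ^ k ^ n * kadicSample g k n ≤ (1 + 2 * L * B) * P := hSP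
      _ ≤ (1 + 2 * L * B) * ((1 + 2 * L) * ∫ t in (0 : ℝ)..r, g t) := by gcongr
      _ = _ := by ring

end KadicIntegral

namespace IsRadialWeight

variable {μ : ℝ → ℝ} (hμ : IsRadialWeight μ) {a b x : ℝ}
include hμ

lemma intervalIntegrable (ha : 0 ≤ a) (hab : a ≤ b) (hb : b ≤ 1) :
    IntervalIntegrable μ volume a b :=
  (((integrableOn_Icc_iff_integrableOn_Ico (by simp)).2 hμ.2.1).mono_set
    (uIcc_subset_Icc ⟨ha, hab.trans hb⟩ ⟨ha.trans hab, hb⟩)).intervalIntegrable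

lemma ae_nonneg (ha : 0 ≤ a) (hb : b ≤ 1) : 0 ≤ᵐ[volume.restrict (Icc a b)] μ := by
  filter_upwards [ae_restrict_mem measurableSet_Icc, ae_restrict_of_ae (Measure.ae_ne volume 1)]
    with s hs hs1
  exact hμ.1 s ⟨ha.trans hs.1, (hs.2.trans hb).lt_of_ne hs1⟩

lemma wHat_eq_add (ha : 0 ≤ a) (hab : a ≤ b) (hb : b ≤ 1) :
    wHat μ a = (∫ s in a..b, μ s) + wHat μ b :=
  (intervalIntegral.integral_add_adjacent_intervals (hμ.intervalIntegrable ha hab hb)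
    (hμ.intervalIntegrable (ha.trans hab) hb le_rfl)).symm

lemma integral_nonneg (ha : 0 ≤ a) (hab : a ≤ b) (hb : b ≤ 1) : 0 ≤ ∫ s in a..b, μ s :=
  intervalIntegral.integral_nonneg_of_ae_restrict hab (hμ.ae_nonneg ha hb)

lemma wHat_nonneg (ha : 0 ≤ a) (ha1 : a ≤ 1) : 0 ≤ wHat μ a :=
  hμ.integral_nonneg ha ha1 le_rfl

lemma wHat_le_wHat (ha : 0 ≤ a) (hab : a ≤ b) (hb : b ≤ 1) : wHat μ b ≤ wHat μ a := by
  linarith [hμ.wHat_eq_add ha hab hb, hμ.integral_nonneg ha hab hb]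

lemma integral_le_wHat (ha : 0 ≤ a) (hab : a ≤ b) (hb : b ≤ 1) : ∫ s in a..b, μ s ≤ wHat μ a := by
  linarith [hμ.wHat_eq_add ha hab hb, hμ.wHat_nonneg (ha.trans hab) hb]

lemma intervalIntegrable_rpow_mul (hx : 0 ≤ x) (ha : 0 ≤ a) (hab : a ≤ b) (hb : b ≤ 1) :
    IntervalIntegrable (fun s => s ^ x * μ s) volume a b :=
  (hμ.intervalIntegrable ha hab hb).continuousOn_mul
    (continuousOn_id.rpow_const fun _ _ => Or.inr hx)

lemma integral_rpow_mul_nonneg (ha : 0 ≤ a) (hab : a ≤ b) (hb : b ≤ 1) :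
    0 ≤ ∫ s in a..b, s ^ x * μ s := by
  refine intervalIntegral.integral_nonneg_of_ae_restrict hab ?_
  filter_upwards [hμ.ae_nonneg ha hb, ae_restrict_mem measurableSet_Icc] with s hs hmem
  exact mul_nonneg (Real.rpow_nonneg (ha.trans hmem.1) x) hs

lemma rpow_mul_wHat_le_integral (hx : 0 ≤ x) (ha : 0 ≤ a) (ha1 : a ≤ 1) :
    a ^ x * wHat μ a ≤ ∫ s in a..1, s ^ x * μ s := by
  rw [wHat, ← intervalIntegral.integral_const_mul]
  refine intervalIntegral.integral_mono_ae_restrict ha1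
    ((hμ.intervalIntegrable ha ha1 le_rfl).const_mul _)
    (hμ.intervalIntegrable_rpow_mul hx ha ha1 le_rfl) ?_
  filter_upwards [hμ.ae_nonneg ha le_rfl, ae_restrict_mem measurableSet_Icc] with s hs hmem
  exact mul_le_mul_of_nonneg_right (Real.rpow_le_rpow ha hmem.1 hx) hs

lemma integral_rpow_mul_le (hx : 0 ≤ x) (ha : 0 ≤ a) (hab : a ≤ b) (hb : b ≤ 1) :
    ∫ s in a..b, s ^ x * μ s ≤ b ^ x * ∫ s in a..b, μ s := by
  rw [← intervalIntegral.integral_const_mul]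
  refine intervalIntegral.integral_mono_ae_restrict hab
    (hμ.intervalIntegrable_rpow_mul hx ha hab hb)
    ((hμ.intervalIntegrable ha hab hb).const_mul _) ?_
  filter_upwards [hμ.ae_nonneg ha hb, ae_restrict_mem measurableSet_Icc] with s hs hmem
  exact mul_le_mul_of_nonneg_right (Real.rpow_le_rpow (ha.trans hmem.1) hmem.2 hx) hs

lemma wMom_nonneg (x : ℝ) : 0 ≤ wMom μ x :=
  hμ.integral_rpow_mul_nonneg le_rfl zero_le_one le_rfl

lemma integral_rpow_mul_le_sum (hx : 0 ≤ x) {k : ℕ} (hk : 1 ≤ k) (n : ℕ) :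
    ∫ s in (0 : ℝ)..kadicPoint k n, s ^ x * μ s ≤
      ∑ j ∈ Finset.range n, kadicPoint k (j + 1) ^ x * wHat μ (kadicPoint k j) := by
  have hsum := intervalIntegral.sum_integral_adjacent_intervals (μ := volume) (a := kadicPoint k)
    (n := n) (f := fun s => s ^ x * μ s) fun j _ => hμ.intervalIntegrable_rpow_mul hx
      (kadicPoint_nonneg hk j) (kadicPoint_mono hk j.le_succ) (kadicPoint_lt_one hk _).le
  rw [kadicPoint_zero] at hsum
  rw [← hsum]
  refine Finset.sum_le_sum fun j _ => ?_
  have h0 := kadicPoint_nonneg hk j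
  have hle := kadicPoint_mono hk j.le_succ
  have h1 := (kadicPoint_lt_one hk (j + 1)).le
  exact (hμ.integral_rpow_mul_le hx h0 hle h1).trans (mul_le_mul_of_nonneg_left
    (hμ.integral_le_wHat h0 hle h1) (Real.rpow_nonneg (h0.trans hle) x))

section Dhat

variable {C : ℝ} (hC0 : 0 ≤ C) (hC : ∀ r ∈ Ico (0 : ℝ) 1, wHat μ r ≤ C * wHat μ ((1 + r) / 2))
include hC0 hC

lemma wHat_kadicPoint_le_pow_mul {k : ℕ} (hk : 1 ≤ k) (n : ℕ) :
    wHat μ (kadicPoint k n) ≤ C ^ k * wHat μ (kadicPoint k (n + 1)) := by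
  set ε := 1 - kadicPoint k n
  have hε : 0 < ε := by linarith [kadicPoint_lt_one hk n]
  have hε1 : ε ≤ 1 := by linarith [kadicPoint_nonneg hk n]
  have hmem : ∀ i : ℕ, 1 - ε / 2 ^ i ∈ Ico (0 : ℝ) 1 := fun i =>
    ⟨by linarith [div_le_self hε.le (one_le_pow₀ (by norm_num : (1 : ℝ) ≤ 2) (n := i))],
      by linarith [div_pos hε (pow_pos (by norm_num : (0 : ℝ) < 2) i)]⟩
  -- halving the distance to `1` `k` times gets at least as close as dividing it by `k`
  have hiter := le_pow_mul_of_le_mul_succ (a := fun i => wHat μ (1 - ε / 2 ^ i)) hC0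
    (fun i => (hC _ (hmem i)).trans_eq (by ring_nf)) 0 k
  simp only [pow_zero, div_one, zero_add, ε, sub_sub_cancel] at hiter
  refine hiter.trans (mul_le_mul_of_nonneg_left (hμ.wHat_le_wHat (kadicPoint_nonneg hk _) ?_
    (hmem k).2.le) (pow_nonneg hC0 k))
  have hk2 : (k : ℝ) ≤ 2 ^ k := by exact_mod_cast (Nat.lt_two_pow_self).le
  rw [kadicPoint_succ, sub_le_sub_iff_left]
  exact div_le_div_of_nonneg_left hε.le (by exact_mod_cast hk) hk2

lemma wHat_le_two_mul_wMom {x : ℝ} (hx : 1 ≤ x) : wHat μ (1 - x⁻¹) ≤ 2 * C * wMom μ x := by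
  have hx0 : 0 < x := by linarith
  have hp : 1 - x⁻¹ ∈ Ico (0 : ℝ) 1 :=
    ⟨sub_nonneg.2 (inv_le_one_of_one_le₀ hx), by linarith [inv_pos.2 hx0]⟩
  set q := (1 + (1 - x⁻¹)) / 2 with hq
  have hq0 : 0 ≤ q := by linarith [hp.1]
  have hq1 : q ≤ 1 := by linarith [hp.2]
  have hhalf : 1 / 2 ≤ q ^ x := by
    have hs : -1 ≤ -(2 * x)⁻¹ := by
      rw [neg_le_neg_iff]; exact inv_le_one_of_one_le₀ (by linarith)
    convert one_add_mul_self_le_rpow_one_add hs hx using 1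
    · field_simp; ring
    · congr 1; simp only [q]; field_simp; ring
  have hmom : q ^ x * wHat μ q ≤ wMom μ x := by
    rw [wMom, ← intervalIntegral.integral_add_adjacent_intervals
      (hμ.intervalIntegrable_rpow_mul hx0.le le_rfl hq0 hq1)
      (hμ.intervalIntegrable_rpow_mul hx0.le hq0 hq1 le_rfl)]
    linarith [hμ.integral_rpow_mul_nonneg (x := x) le_rfl hq0 hq1,
      hμ.rpow_mul_wHat_le_integral hx0.le hq0 hq1]
  have hW := hμ.wHat_nonneg hq0 hq1
  calc wHat μ (1 - x⁻¹) ≤ C * wHat μ q := hC _ hp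
    _ ≤ C * (2 * (q ^ x * wHat μ q)) := by gcongr; nlinarith
    _ ≤ 2 * C * wMom μ x := by nlinarith

lemma wMom_le_mul_wHat_kadicPoint {k : ℕ} (hk : 2 ≤ k) (n : ℕ) :
    wMom μ ((k : ℝ) ^ n) ≤
      (1 + C ^ k * ∑' i : ℕ, (C ^ k) ^ i * Real.exp (-(k : ℝ) ^ i)) * wHat μ (kadicPoint k n) := by
  set K := C ^ k
  set w := fun j => wHat μ (kadicPoint k j)
  have hK : 0 ≤ K := pow_nonneg hC0 k
  have hx : (0 : ℝ) ≤ (k : ℝ) ^ n := by positivity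
  have h0 := kadicPoint_nonneg (k := k) (by omega) n
  have h1 := (kadicPoint_lt_one (k := k) (by omega) n).le
  have hsplit := intervalIntegral.integral_add_adjacent_intervals
    (hμ.intervalIntegrable_rpow_mul hx le_rfl h0 h1)
    (hμ.intervalIntegrable_rpow_mul hx h0 h1 le_rfl)
  have htail : ∫ s in kadicPoint k n..1, s ^ ((k : ℝ) ^ n) * μ s ≤ w n := by
    simpa using (hμ.integral_rpow_mul_le hx h0 h1 le_rfl).trans_eq (by rw [Real.one_rpow, one_mul])
      |>.trans (hμ.integral_le_wHat h0 h1 le_rfl)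
  have hterm : ∀ i < n, kadicPoint k (n - 1 - i + 1) ^ ((k : ℝ) ^ n) * w (n - 1 - i) ≤
      K * (K ^ i * Real.exp (-(k : ℝ) ^ i)) * w n := by
    intro i hi
    have hpow : kadicPoint k (n - 1 - i + 1) ^ ((k : ℝ) ^ n) ≤ Real.exp (-(k : ℝ) ^ i) := by
      have := kadicPoint_pow_le_exp (k := k) (by omega) (n - 1 - i + 1) i
      rwa [show n - 1 - i + 1 + i = n by omega, ← Real.rpow_natCast, Nat.cast_pow] at this
    have hw : w (n - 1 - i) ≤ K ^ (i + 1) * w n := by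
      have := le_pow_mul_of_le_mul_succ hK (hμ.wHat_kadicPoint_le_pow_mul hC0 hC (by omega))
        (n - 1 - i) (i + 1)
      rwa [show n - 1 - i + (i + 1) = n by omega] at this
    calc _ ≤ Real.exp (-(k : ℝ) ^ i) * (K ^ (i + 1) * w n) :=
          mul_le_mul hpow hw (hμ.wHat_nonneg (kadicPoint_nonneg (by omega) _)
            (kadicPoint_lt_one (by omega) _).le) (Real.exp_pos _).le
      _ = K * (K ^ i * Real.exp (-(k : ℝ) ^ i)) * w n := by ring
  have hhead : ∫ s in (0 : ℝ)..kadicPoint k n, s ^ ((k : ℝ) ^ n) * μ s ≤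
      K * (∑' i : ℕ, K ^ i * Real.exp (-(k : ℝ) ^ i)) * w n := by
    refine (hμ.integral_rpow_mul_le_sum hx (by omega) n).trans ?_
    rw [← Finset.sum_range_reflect]
    refine (Finset.sum_le_sum fun i hi => hterm i (Finset.mem_range.1 hi)).trans ?_
    rw [← Finset.sum_mul, ← Finset.mul_sum]
    gcongr
    · exact hμ.wHat_nonneg h0 h1
    · exact (summable_pow_mul_exp_neg_pow (by exact_mod_cast hk) K).sum_le_tsum _
        fun i _ => by positivity
  rw [wMom, ← hsplit]
  linarith

end Dhat

variable {γ : ℝ} (hγ : 0 ≤ γ) {k : ℕ} (hk : 2 ≤ k)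
include hγ

omit hk in
lemma monotoneOn_inv_mul_wHat_rpow :
    MonotoneOn (fun t => ((1 - t) * wHat μ t ^ γ)⁻¹) (Ico 0 1) := by
  intro s hs t ht hst
  have hwt := hμ.2.2 t ht
  refine inv_anti₀ (mul_pos (by linarith [ht.2]) (Real.rpow_pos_of_pos hwt γ)) ?_
  exact mul_le_mul (by linarith) (Real.rpow_le_rpow hwt.le (hμ.wHat_le_wHat hs.1 hst ht.2.le) hγ)
    (by positivity) (by linarith [hs.2])

include hk

lemma exists_inv_rpow_wMom_asymp (hD : Dhat μ) :
    ∃ c > (0 : ℝ), ∃ c' > (0 : ℝ), ∀ n : ℕ,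
      c * (wHat μ (kadicPoint k n) ^ γ)⁻¹ ≤ (wMom μ ((k : ℝ) ^ n) ^ γ)⁻¹ ∧
        (wMom μ ((k : ℝ) ^ n) ^ γ)⁻¹ ≤ c' * (wHat μ (kadicPoint k n) ^ γ)⁻¹ := by
  obtain ⟨C, hC1, hC⟩ := hD
  have hC0 : 0 ≤ C := by linarith
  set A := 1 + C ^ k * ∑' i : ℕ, (C ^ k) ^ i * Real.exp (-(k : ℝ) ^ i)
  have hA : 0 < A := by positivity
  refine ⟨(A ^ γ)⁻¹, by positivity, (2 * C) ^ γ, by positivity, fun n => ?_⟩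
  have hw := hμ.2.2 _ ⟨kadicPoint_nonneg (k := k) (by omega) n, kadicPoint_lt_one (by omega) n⟩
  have hlow : wHat μ (kadicPoint k n) ≤ 2 * C * wMom μ ((k : ℝ) ^ n) :=
    hμ.wHat_le_two_mul_wMom hC0 hC (one_le_pow₀ (by exact_mod_cast (by omega : 1 ≤ k)))
  have hmom : 0 < wMom μ ((k : ℝ) ^ n) := by nlinarith
  refine ⟨?_, inv_rpow_le_mul_inv_rpow hw (by positivity) hγ hlow⟩
  rw [inv_mul_le_iff₀ (by positivity)]
  exact inv_rpow_le_mul_inv_rpow hmom hA.le hγ (hμ.wMom_le_mul_wHat_kadicPoint hC0 hC hk n)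

lemma exists_integral_asymp_tsum_pow_mul_inv_wHat_rpow (hD : Dhat μ) :
    ∃ c₁ > (0 : ℝ), ∃ c₂ > (0 : ℝ), ∀ r ∈ Ico (0 : ℝ) 1,
      Summable (fun n => r ^ k ^ n * (wHat μ (kadicPoint k n) ^ γ)⁻¹) ∧
      c₁ * ∫ t in (0 : ℝ)..r, ((1 - t) * wHat μ t ^ γ)⁻¹ ≤
        ∑' n, r ^ k ^ n * (wHat μ (kadicPoint k n) ^ γ)⁻¹ ∧
      ∑' n, r ^ k ^ n * (wHat μ (kadicPoint k n) ^ γ)⁻¹ ≤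
        c₂ * ∫ t in (0 : ℝ)..r, ((1 - t) * wHat μ t ^ γ)⁻¹ := by
  obtain ⟨C, hC1, hC⟩ := hD
  have hw : ∀ n, 0 < wHat μ (kadicPoint k n) := fun n =>
    hμ.2.2 _ ⟨kadicPoint_nonneg (by omega) n, kadicPoint_lt_one (by omega) n⟩
  have hsample : ∀ n, kadicSample (fun t => ((1 - t) * wHat μ t ^ γ)⁻¹) k n =
      (wHat μ (kadicPoint k n) ^ γ)⁻¹ := fun n => by
    have := kadicPoint_lt_one (k := k) (by omega) n
    rw [kadicSample, mul_inv, mul_inv_cancel_left₀ (by linarith)]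
  have hstep : ∀ n, kadicSample (fun t => ((1 - t) * wHat μ t ^ γ)⁻¹) k (n + 1) ≤
      (C ^ k) ^ γ * kadicSample (fun t => ((1 - t) * wHat μ t ^ γ)⁻¹) k n := fun n => by
    rw [hsample, hsample]
    exact inv_rpow_le_mul_inv_rpow (hw n) (by positivity) hγ
      (hμ.wHat_kadicPoint_le_pow_mul (by linarith) hC (by omega) n)
  have hg0 : 0 ≤ ((1 - 0) * wHat μ 0 ^ γ)⁻¹ := by
    have := hμ.2.2 0 ⟨le_rfl, one_pos⟩; positivity
  simpa only [hsample] using exists_integral_asymp_tsum_pow_mul_kadicSample hk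
    (hμ.monotoneOn_inv_mul_wHat_rpow hγ) hg0 (by positivity) hstep

end IsRadialWeight

/-- **Lemma (sum vs. integral, `D̂` case).** If `μ ∈ D̂`, `γ > 0` and `k ∈ ℕ`, `k ≥ 2`,
then `Σ_{n≥0} r^{kⁿ}/μ_{kⁿ}^γ ≍ ∫_0^r dt/((1-t) μ̂(t)^γ)` for `0 ≤ r < 1`. -/
theorem sum_rpow_moment_asymp_integral (μ : ℝ → ℝ) (hμ : IsRadialWeight μ)
    (hμD : Dhat μ) (γ : ℝ) (hγ : 0 < γ) (k : ℕ) (hk : 2 ≤ k) :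
    ∃ C₁ > (0:ℝ), ∃ C₂ > (0:ℝ), ∀ r ∈ Set.Ico (0:ℝ) 1,
      C₁ * ∫ t in (0:ℝ)..r, ((1 - t) * wHat μ t ^ γ)⁻¹ ≤
          (∑' n : ℕ, r ^ (k ^ n) / wMom μ ((k : ℝ) ^ n) ^ γ) ∧
        (∑' n : ℕ, r ^ (k ^ n) / wMom μ ((k : ℝ) ^ n) ^ γ) ≤
          C₂ * ∫ t in (0:ℝ)..r, ((1 - t) * wHat μ t ^ γ)⁻¹ := by
  obtain ⟨c, hc, c', hc', hmom⟩ := hμ.exists_inv_rpow_wMom_asymp hγ.le hk hμD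
  obtain ⟨c₁, hc₁, c₂, hc₂, hmodel⟩ :=
    hμ.exists_integral_asymp_tsum_pow_mul_inv_wHat_rpow hγ.le hk hμD
  refine ⟨c₁ * c, by positivity, c' * c₂, by positivity, fun r hr => ?_⟩
  obtain ⟨hs, hlow, hup⟩ := hmodel r hr
  have hle : ∀ n, r ^ k ^ n / wMom μ ((k : ℝ) ^ n) ^ γ ≤
      c' * (r ^ k ^ n * (wHat μ (kadicPoint k n) ^ γ)⁻¹) := fun n => by
    rw [div_eq_mul_inv, mul_left_comm]; gcongr; exacts [pow_nonneg hr.1 _, (hmom n).2]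
  have hge : ∀ n, c * (r ^ k ^ n * (wHat μ (kadicPoint k n) ^ γ)⁻¹) ≤
      r ^ k ^ n / wMom μ ((k : ℝ) ^ n) ^ γ := fun n => by
    rw [div_eq_mul_inv, mul_left_comm]; gcongr; exacts [pow_nonneg hr.1 _, (hmom n).1]
  have hS : Summable fun n => r ^ k ^ n / wMom μ ((k : ℝ) ^ n) ^ γ :=
    (hs.mul_left c').of_nonneg_of_le
      (fun n => div_nonneg (pow_nonneg hr.1 _) (Real.rpow_nonneg (hμ.wMom_nonneg _) γ)) hle
  constructor
  · calc c₁ * c * ∫ t in (0 : ℝ)..r, ((1 - t) * wHat μ t ^ γ)⁻¹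
        ≤ c * ∑' n, r ^ k ^ n * (wHat μ (kadicPoint k n) ^ γ)⁻¹ := by
          rw [mul_comm c₁, mul_assoc]; gcongr
      _ ≤ ∑' n, r ^ k ^ n / wMom μ ((k : ℝ) ^ n) ^ γ := by
          rw [← tsum_mul_left]; exact (hs.mul_left c).tsum_le_tsum hge hS
  · calc ∑' n, r ^ k ^ n / wMom μ ((k : ℝ) ^ n) ^ γ
        ≤ c' * ∑' n, r ^ k ^ n * (wHat μ (kadicPoint k n) ^ γ)⁻¹ := by
          rw [← tsum_mul_left]; exact hS.tsum_le_tsum hle (hs.mul_left c')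
      _ ≤ c' * c₂ * ∫ t in (0 : ℝ)..r, ((1 - t) * wHat μ t ^ γ)⁻¹ := by
          rw [mul_assoc]; gcongr
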